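/- The A-semantics of S-CORE is weakly reversible: for every S-CORE term P and states σ, τ, ⟨P, σ⟩ ⇓ τ if and only if ⟨inv P, τ⟩ ⇓ σ. -/

import Mathlib

inductive Term where
  | skip : Term
  | inc : String → Term
  | dec : String → Term
  | push : String → Term
  | pop : String → Term
  | seq : Term → Term → Term
  | forLoop : String → Term → Term

def inv : Term → Term
  | .skip => .skip
  | .inc x => .dec x
  | .dec x => .inc x
  | .push x => .pop x
  | .pop x => .push x
  | .seq p q => .seq (inv q) (inv p)
  | .forLoop x p => .forLoop x (inv p)

abbrev AState := String → ℤ × List ℤ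

def upd (σ : AState) (x : String) (p : ℤ × List ℤ) : AState :=
  fun y => if y = x then p else σ y

mutual
/-- The big-step A-semantics (assert-based, partial) of S-CORE. -/
inductive ABig : Term → AState → AState → Prop where
  | skip (σ) : ABig .skip σ σ
  | inc (x σ) : ABig (.inc x) σ (upd σ x ((σ x).1 + 1, (σ x).2))
  | dec (x σ) : ABig (.dec x) σ (upd σ x ((σ x).1 - 1, (σ x).2))
  | push (x σ) : ABig (.push x) σ (upd σ x (0, (σ x).1 :: (σ x).2))
  | pop {x σ h t} : σ x = (0, h :: t) → ABig (.pop x) σ (upd σ x (h, t))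
  | seq {p q σ ν τ} : ABig p σ ν → ABig q ν τ → ABig (.seq p q) σ τ
  | forFwd {x p σ τ} : (σ x).1 ≥ 0 → AIter p (σ x).1.toNat σ τ →
      ABig (.forLoop x p) σ τ
  | forBwd {x p σ τ} : (σ x).1 < 0 → AIter (inv p) (-(σ x).1).toNat σ τ →
      ABig (.forLoop x p) σ τ

inductive AIter : Term → ℕ → AState → AState → Prop where
  | base (p σ) : AIter p 0 σ σ
  | step {p n σ ν τ} : ABig p σ ν → AIter p n ν τ → AIter p (n+1) σ τ
end

def occurs (x : String) : Term → Prop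
  | .skip => False
  | .inc y => x = y
  | .dec y => x = y
  | .push y => x = y
  | .pop y => x = y
  | .seq p q => occurs x p ∨ occurs x q
  | .forLoop y p => x = y ∨ occurs x p

/-- Well-formed terms: the leading variable of a `FOR` never occurs in its body. -/
def WF : Term → Prop
  | .seq p q => WF p ∧ WF q
  | .forLoop x p => ¬ occurs x p ∧ WF p
  | _ => True

/-!
Every atomic command is undone by its inverse (`POP` is defined exactly on the states `PUSH`
produces), and sequencing reverses the order of the inverted parts. For a loop `FOR x {P}` the
body never touches `x`, so the iteration count `σ x` is the same in the initial and the final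
state; running `inv P` (or `P`, for a negative count) the same number of times then retraces the
iterations backwards. The converse direction is the forward one applied to `inv P`, since `inv`
is an involution preserving well-formedness.
-/

theorem Term.inv_involutive : Function.Involutive inv := fun p => by
  induction p <;> simp [inv, *]

theorem occurs_inv (x : String) (p : Term) : occurs x (inv p) ↔ occurs x p := by
  induction p <;> simp [inv, occurs, or_comm, *]

theorem WF.inv {p : Term} (h : WF p) : WF (inv p) := by
  induction p <;> simp_all [_root_.inv, WF, occurs_inv]

section upd

variable (σ : AState) (x : String)

@[simp]
theorem upd_self (p : ℤ × List ℤ) : upd σ x p x = p := by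
  simp [upd]

@[simp]
theorem upd_idem (p q : ℤ × List ℤ) : upd (upd σ x p) x q = upd σ x q := by
  funext y
  by_cases hy : y = x <;> simp [upd, hy]

@[simp]
theorem upd_eq_self : upd σ x (σ x) = σ := by
  funext y
  by_cases hy : y = x <;> simp [upd, hy]

theorem upd_of_ne {y : String} (p : ℤ × List ℤ) (h : y ≠ x) : upd σ x p y = σ y := by
  simp [upd, h]

end upd

theorem AIter.snoc {p : Term} {n : ℕ} {σ ν τ : AState} (h : AIter p n σ ν) (h' : ABig p ν τ) :
    AIter p (n + 1) σ τ := by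
  induction n generalizing σ with
  | zero => cases h; exact .step h' (.base _ _)
  | succ n ih => cases h with
    | step hp hit => exact .step hp (ih hit)

mutual

theorem ABig.apply_eq_of_not_occurs {p : Term} {σ τ : AState} {x : String} :
    ABig p σ τ → ¬ occurs x p → τ x = σ x
  | .skip _, _ => rfl
  | .inc _ _, hx | .dec _ _, hx | .push _ _, hx | .pop _, hx => upd_of_ne _ _ _ hx
  | .seq hp hq, hx => by
    simp only [occurs, not_or] at hx
    rw [hq.apply_eq_of_not_occurs hx.2, hp.apply_eq_of_not_occurs hx.1]
  | .forFwd _ hit, hx => hit.apply_eq_of_not_occurs fun h => hx (.inr h)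
  | .forBwd _ hit, hx => hit.apply_eq_of_not_occurs fun h => hx (.inr ((occurs_inv _ _).1 h))

theorem AIter.apply_eq_of_not_occurs {p : Term} {n : ℕ} {σ τ : AState} {x : String} :
    AIter p n σ τ → ¬ occurs x p → τ x = σ x
  | .base _ _, _ => rfl
  | .step hp hit, hx => by
    rw [hit.apply_eq_of_not_occurs hx, hp.apply_eq_of_not_occurs hx]

end

mutual

theorem ABig.reverse {p : Term} {σ τ : AState} : ABig p σ τ → WF p → ABig (inv p) τ σ
  | .skip σ, _ => .skip σ
  | .inc x σ, _ => by simpa [inv] using ABig.dec x (upd σ x ((σ x).1 + 1, (σ x).2))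
  | .dec x σ, _ => by simpa [inv] using ABig.inc x (upd σ x ((σ x).1 - 1, (σ x).2))
  | .push x σ, _ => by simpa [inv] using ABig.pop (upd_self σ x (0, (σ x).1 :: (σ x).2))
  | .pop (x := x) (σ := σ) (h := h) (t := t) hσ, _ => by
    simpa [inv, ← hσ] using ABig.push x (upd σ x (h, t))
  | .seq hp hq, hw => .seq (hq.reverse hw.2) (hp.reverse hw.1)
  | .forFwd hge hit, hw => by
    have hx := hit.apply_eq_of_not_occurs hw.1
    exact .forFwd (hx ▸ hge) (hx ▸ hit.reverse hw.2)
  | .forBwd hlt hit, hw => by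
    have hx := hit.apply_eq_of_not_occurs ((occurs_inv _ _).not.2 hw.1)
    exact .forBwd (hx ▸ hlt) (hx ▸ hit.reverse hw.2.inv)

theorem AIter.reverse {p : Term} {n : ℕ} {σ τ : AState} :
    AIter p n σ τ → WF p → AIter (inv p) n τ σ
  | .base _ σ, _ => .base _ σ
  | .step hp hit, hw => (hit.reverse hw).snoc (hp.reverse hw)

end

theorem asem_weakly_reversible (P : Term) (hP : WF P) (σ τ : AState) :
    ABig P σ τ ↔ ABig (inv P) τ σ :=
  ⟨fun h => h.reverse hP, fun h => Term.inv_involutive P ▸ h.reverse hP.inv⟩
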